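/- Let G be a graph with root x that has a rooted immersion of W_4 with terminal set T. If G has a segmentation X_0 ⊂ X_1 ⊂ … ⊂ X_k of width four with x ∈ X_0 and |X_0| ≤ 2, then T ∩ X_k = {x}. -/
import Mathlib


open scoped Classical

noncomputable section

namespace PaperW4

/-- A finite loopless undirected multigraph on ambient vertex type `V`:
a finite vertex set together with a multiset of (non-loop) edges supported on it. -/
structure MG (V : Type) where
  verts : Finset V
  edges : Multiset (Sym2 V)
  edge_support : ∀ e ∈ edges, ∀ v ∈ e, v ∈ verts
  loopless : ∀ e ∈ edges, ¬ e.IsDiag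

variable {V : Type} {W : Type}

/-- `δ_G(X)`: the edges of `G` with exactly one endpoint in `X`. -/
def cutEdges (G : MG V) (X : Finset V) : Multiset (Sym2 V) :=
  G.edges.filter fun e => ∃ u v, e = s(u, v) ∧ u ∈ X ∧ v ∉ X

/-- `d_G(X) = |δ_G(X)|`. -/
def dcut (G : MG V) (X : Finset V) : ℕ := (cutEdges G X).card

/-- The degree of a vertex: the number of edges incident with it. -/
def deg (G : MG V) (v : V) : ℕ := (G.edges.filter fun e => v ∈ e).card

/-- `e_G(u,v)`: the number of edges joining `u` and `v`. -/
def emult (G : MG V) (u v : V) : ℕ := G.edges.count s(u, v)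

/-- `G` is `k`-edge-connected: every edge-cut `δ(X)` with `∅ ≠ X ⊊ V(G)` has size `≥ k`. -/
def EdgeConn (G : MG V) (k : ℕ) : Prop :=
  ∀ X : Finset V, X ⊆ G.verts → X.Nonempty → X ≠ G.verts → k ≤ dcut G X

/-- `G` is internally `k`-edge-connected: every edge-cut with at least two vertices
on each side has size `≥ k`. -/
def InternallyEdgeConn (G : MG V) (k : ℕ) : Prop :=
  ∀ X : Finset V, X ⊆ G.verts → 2 ≤ X.card → 2 ≤ (G.verts \ X).card → k ≤ dcut G X

/-- Every vertex has degree three. -/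
def Cubic (G : MG V) : Prop := ∀ v ∈ G.verts, deg G v = 3

/-- The multiset of edges traversed by a walk, given as its list of vertices. -/
def walkEdges (l : List V) : Multiset (Sym2 V) :=
  (↑((l.zip l.tail).map fun p => s(p.1, p.2)) : Multiset (Sym2 V))

/-- `l` is (the vertex sequence of) a walk from `u` to `v`. -/
def IsWalk (l : List V) (u v : V) : Prop :=
  l.head? = some u ∧ l.getLast? = some v

/-- `G` is connected: any two of its vertices are joined by a trail in `G`. -/
def Connected (G : MG V) : Prop :=
  ∀ u ∈ G.verts, ∀ v ∈ G.verts,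
    ∃ l : List V, IsWalk l u v ∧ walkEdges l ≤ G.edges ∧ ∀ w ∈ l, w ∈ G.verts

/-- An immersion of the loopless multigraph with vertex type `W` and edge multiset `H`
into `G`, with terminal map `φ`: `φ` is injective, and to each edge `uv` of `H` is
assigned a walk in `G` from `φ u` to `φ v`, these walks being globally edge-disjoint. -/
def ImmersionVia (G : MG V) (H : Multiset (Sym2 W)) (φ : W → V) : Prop :=
  Function.Injective φ ∧ (∀ w : W, φ w ∈ G.verts) ∧
  ∃ P : Multiset (Sym2 W × List V),
    P.map Prod.fst = H ∧
    (∀ p ∈ P, ∃ u v : W, p.1 = s(u, v) ∧ IsWalk p.2 (φ u) (φ v)) ∧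
    (P.map fun p => walkEdges p.2).sum ≤ G.edges

/-- The edges of the wheel `W₄`: vertex `0` is the center, `1,2,3,4` the rim cycle. -/
def w4Edges : Multiset (Sym2 (Fin 5)) :=
  {s(0, 1), s(0, 2), s(0, 3), s(0, 4), s(1, 2), s(2, 3), s(3, 4), s(4, 1)}

/-- `G` has an immersion of `W₄`. -/
def HasW4Immersion (G : MG V) : Prop :=
  ∃ φ : Fin 5 → V, ImmersionVia G w4Edges φ

/-- `G` (rooted at `x`) has a rooted immersion of `W₄`: one in which the
center of `W₄` corresponds to `x`. -/
def HasRootedW4Immersion (G : MG V) (x : V) : Prop :=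
  ∃ φ : Fin 5 → V, φ 0 = x ∧ ImmersionVia G w4Edges φ

/-- The edges of `D_m`: roots are `0, 1`; vertices `2, 3` play the role of `y₀, y₁`;
there are `m - 2` parallel edges between the two roots. -/
def dmEdges (m : ℕ) : Multiset (Sym2 (Fin 4)) :=
  Multiset.replicate (m - 2) s(0, 1) + {s(0, 2), s(0, 3), s(1, 2), s(1, 3), s(2, 3)}

/-- `G` with roots `x0, x1` has a rooted immersion of `D_m`. -/
def HasRootedDmImmersion (G : MG V) (m : ℕ) (x0 x1 : V) : Prop :=
  ∃ φ : Fin 4 → V, φ 0 = x0 ∧ φ 1 = x1 ∧ ImmersionVia G (dmEdges m) φ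

/-- The edges of `K₄`. -/
def k4Edges : Multiset (Sym2 (Fin 4)) :=
  {s(0, 1), s(0, 2), s(0, 3), s(1, 2), s(1, 3), s(2, 3)}

/-- A nested chain of vertex sets `C 0 ⊂ C 1 ⊂ ⋯`, each obtained from the previous
by adding one vertex, all cuts having size exactly `k`. -/
def SegChain (G : MG V) (n : ℕ) (C : Fin (n + 1) → Finset V) (k : ℕ) : Prop :=
  (∀ i, C i ⊆ G.verts) ∧
  (∀ i : Fin n, C i.castSucc ⊆ C i.succ ∧ (C i.succ \ C i.castSucc).card = 1) ∧
  (∀ i, dcut G (C i) = k)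

/-- `G` has a segmentation of width `k` relative to `(X, Y)`. -/
def HasSegmentation (G : MG V) (X Y : Finset V) (k : ℕ) : Prop :=
  ∃ (n : ℕ) (C : Fin (n + 1) → Finset V),
    SegChain G n C k ∧ C 0 = X ∧ G.verts \ C (Fin.last n) = Y

/-- `λ_s(G) ≥ m`: every edge-cut separating `x0` from `x1` has size `≥ m`. -/
def LamSGe (G : MG V) (x0 x1 : V) (m : ℕ) : Prop :=
  ∀ X : Finset V, X ⊆ G.verts → x0 ∈ X → x1 ∉ X → m ≤ dcut G X

/-- `λ_n(G) ≥ m`: every edge-cut not separating `x0` from `x1` has size `≥ m`. -/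
def LamNGe (G : MG V) (x0 x1 : V) (m : ℕ) : Prop :=
  ∀ X : Finset V, X ⊆ G.verts → X.Nonempty → X ≠ G.verts →
    (x0 ∈ X ↔ x1 ∈ X) → m ≤ dcut G X

/-- `λ_n^i(G) ≥ m`: every internal edge-cut not separating `x0` from `x1` has size `≥ m`. -/
def LamNiGe (G : MG V) (x0 x1 : V) (m : ℕ) : Prop :=
  ∀ X : Finset V, X ⊆ G.verts → 2 ≤ X.card → 2 ≤ (G.verts \ X).card →
    (x0 ∈ X ↔ x1 ∈ X) → m ≤ dcut G X

/-- The subgraph of `G` induced on `S`. -/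
def induce (G : MG V) (S : Finset V) : MG V where
  verts := G.verts ∩ S
  edges := G.edges.filter fun e => ∀ v ∈ e, v ∈ S
  edge_support := by
    intro e he v hv
    rw [Multiset.mem_filter] at he
    exact Finset.mem_inter.mpr ⟨G.edge_support e he.1 v hv, he.2 v hv⟩
  loopless := fun e he => G.loopless e (Multiset.mem_of_mem_filter he)

/-- `G` with the vertices of `S` (and all incident edges) deleted. -/
def deleteVerts (G : MG V) (S : Finset V) : MG V := induce G (G.verts \ S)

/-- `C` is (the vertex set of) a connected component of `G`. -/
def IsComponent (G : MG V) (C : Finset V) : Prop :=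
  C ⊆ G.verts ∧ C.Nonempty ∧ Connected (induce G C) ∧
  ∀ e ∈ G.edges, (∃ v ∈ e, v ∈ C) → ∀ v ∈ e, v ∈ C

/-- `G` has type `A_m` with respect to roots `x0, x1`. -/
def TypeA (G : MG V) (m : ℕ) (x0 x1 : V) : Prop :=
  ∃ X0 X1 : Finset V, x0 ∈ X0 ∧ x1 ∈ X1 ∧ X0.card ≤ 2 ∧ X1.card ≤ 2 ∧
    HasSegmentation G X0 X1 m

/-- The edges of the lobe of `G` (with roots `x0, x1`) corresponding to the
component `C` of `G ∖ {x0, x1}`: edges inside `C ∪ {x0, x1}` other than `x0x1`-edges. -/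
def lobeEdges (G : MG V) (C : Finset V) (x0 x1 : V) : Multiset (Sym2 V) :=
  G.edges.filter fun e => (∀ v ∈ e, v ∈ insert x0 (insert x1 C)) ∧ e ≠ s(x0, x1)

/-- `G` has type `B_m` with respect to roots `x0, x1`. -/
def TypeB (G : MG V) (m : ℕ) (x0 x1 : V) : Prop :=
  ∃ (k : ℕ) (C : Fin k → Finset V) (nL : Fin k → ℕ),
    Function.Injective C ∧
    (∀ D : Finset V, IsComponent (deleteVerts G {x0, x1}) D ↔ ∃ i, C i = D) ∧
    (∀ i : Fin k, 2 ≤ nL i ∧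
      ∃ l : List V, l.Nodup ∧ IsWalk l x0 x1 ∧
        l.toFinset = insert x0 (insert x1 (C i)) ∧
        (2 ≤ (C i).card → nL i = 2) ∧
        lobeEdges G (C i) x0 x1 = nL i • walkEdges l) ∧
    emult G x0 x1 + ∑ i, nL i = m + 1

/-- The edge multiset of a cycle of length `n` on the vertices `f 0, f 1, …`. -/
def cycleEdges (n : ℕ) (f : Fin n → V) : Multiset (Sym2 V) :=
  (Finset.univ.val : Multiset (Fin n)).map fun i =>
    s(f i, f ⟨(i.val + 1) % n, Nat.mod_lt _ i.pos⟩)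

/-- `G` is a doubled cycle of length `n`. -/
def IsDoubledCycleLen (G : MG V) (n : ℕ) : Prop :=
  ∃ f : Fin n → V, Function.Injective f ∧ Finset.univ.image f = G.verts ∧
    G.edges = 2 • cycleEdges n f

/-- `G` is a doubled cycle. -/
def IsDoubledCycle (G : MG V) : Prop := ∃ n, 3 ≤ n ∧ IsDoubledCycleLen G n

/-- The map collapsing all of `Y` to the vertex `y0` and fixing everything else. -/
def collapseFun (Y : Finset V) (y0 : V) : V → V := fun v => if v ∈ Y then y0 else v

/-- The image multigraph of `G` under a vertex map `f` (identification of vertices),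
with any created loops deleted. -/
def mapGraph (f : V → V) (G : MG V) : MG V where
  verts := G.verts.image f
  edges := (G.edges.map (Sym2.map f)).filter fun e => ¬e.IsDiag
  edge_support := by
    intro e he v hv
    rw [Multiset.mem_filter] at he
    obtain ⟨he, -⟩ := he
    rw [Multiset.mem_map] at he
    obtain ⟨e', he', rfl⟩ := he
    rw [Sym2.mem_map] at hv
    obtain ⟨u, hu, rfl⟩ := hv
    exact Finset.mem_image_of_mem f (G.edge_support e' he' u hu)
  loopless := by
    intro e he
    rw [Multiset.mem_filter] at he
    exact he.2

/-- `G[X]` is a chain of sausages of order `k` in `G`: identifying `V(G) ∖ X` to a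
single vertex yields a doubled cycle of length `k + 1`. -/
def ChainOfSausages (G : MG V) (X : Finset V) (k : ℕ) : Prop :=
  X ⊆ G.verts ∧ X.card = k ∧ 2 ≤ k ∧
  ∃ y0 ∈ G.verts \ X,
    IsDoubledCycleLen (mapGraph (collapseFun (G.verts \ X) y0) G) (k + 1)

/-- `G` is sausage reduced: it has no chain of sausages of order at least `3`. -/
def SausageReduced (G : MG V) : Prop :=
  ¬ ∃ (X : Finset V) (k : ℕ), 3 ≤ k ∧ ChainOfSausages G X k

/-- One sausage shortening step of a rooted graph: two adjacent vertices of a chain of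
sausages of order at least three are identified, carrying the root along. -/
def RootedShortStep (p q : MG V × V) : Prop :=
  ∃ (X : Finset V) (k : ℕ) (a b : V),
    3 ≤ k ∧ ChainOfSausages p.1 X k ∧ a ∈ X ∧ b ∈ X ∧ a ≠ b ∧ s(a, b) ∈ p.1.edges ∧
    q.1 = mapGraph (fun v => if v = b then a else v) p.1 ∧
    q.2 = (if p.2 = b then a else p.2)

/-- Deleting a single copy of the edge `e` from `G`. -/
def deleteEdge (G : MG V) (e : Sym2 V) : MG V where
  verts := G.verts
  edges := G.edges.erase e
  edge_support := fun e' he' => G.edge_support e' (Multiset.mem_of_mem_erase he')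
  loopless := fun e' he' => G.loopless e' (Multiset.mem_of_mem_erase he')

/-- `G` has a tree-decomposition of width at most `k`. -/
def HasTreeDecomp (G : MG V) (k : ℕ) : Prop :=
  ∃ (ι : Type) (T : SimpleGraph ι) (B : ι → Finset V),
    T.IsTree ∧
    (∀ t, B t ⊆ G.verts) ∧
    (∀ v ∈ G.verts, ∃ t, v ∈ B t) ∧
    (∀ e ∈ G.edges, ∃ t, ∀ v ∈ e, v ∈ B t) ∧
    (∀ v ∈ G.verts, (SimpleGraph.induce {t | v ∈ B t} T).Connected) ∧
    ∀ t, (B t).card ≤ k + 1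

/-- The tree-width of `G`. -/
def treewidth (G : MG V) : ℕ := sInf { k | HasTreeDecomp G k }

/-- One subdivision step: an edge `uv` is replaced by a path `u - w - v`
through a new vertex `w`. -/
def SubdivStep (G H : MG V) : Prop :=
  ∃ u v w : V, s(u, v) ∈ G.edges ∧ w ∉ G.verts ∧
    H.verts = insert w G.verts ∧
    H.edges = (G.edges.erase s(u, v)) + {s(u, w), s(w, v)}

/-- `H` is a subdivision of `G`. -/
def IsSubdivision (G H : MG V) : Prop := Relation.ReflTransGen SubdivStep G H

/-- `G`, rooted at `u`, has type 2 (for the rooted `W₄` theorem). -/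
def TypeTwo (G : MG V) (u : V) : Prop :=
  ∃ W0 : Finset V, W0 ⊆ G.verts ∧ u ∉ W0 ∧ 1 ≤ W0.card ∧ W0.card ≤ 2 ∧
    ∃ w0 ∈ W0,
      ∃ n : ℕ, 3 ≤ n ∧
        ∃ f : Fin n → V,
          Function.Injective f ∧
          Finset.univ.image f = (mapGraph (collapseFun W0 w0) G).verts ∧
          (∃ i, f i = u) ∧ (∃ j, f j = w0) ∧
          ((s(u, w0) ∉ cycleEdges n f ∧
              (mapGraph (collapseFun W0 w0) G).edges =
                2 • cycleEdges n f + {s(u, w0)}) ∨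
           (∃ v : V, s(u, v) ∈ cycleEdges n f ∧ s(v, w0) ∈ cycleEdges n f ∧
              (mapGraph (collapseFun W0 w0) G).edges =
                2 • cycleEdges n f + {s(u, v), s(v, w0)}) ∨
           (s(u, w0) ∈ cycleEdges n f ∧
              (mapGraph (collapseFun W0 w0) G).edges =
                2 • cycleEdges n f + {s(u, w0)}))

lemma walk_cross {X : Finset V} : ∀ (l : List V) (u v : V), IsWalk l u v →
    ((u ∈ X ∧ v ∉ X) ∨ (v ∈ X ∧ u ∉ X)) →
    ∃ e ∈ walkEdges l, ∃ a b, e = s(a, b) ∧ a ∈ X ∧ b ∉ X := by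
  intro l
  induction l with
  | nil => intro u v h; simp [IsWalk] at h
  | cons a t ih =>
    intro u v h hor
    obtain ⟨h1, h2⟩ := h
    simp at h1; subst h1
    match t with
    | [] =>
      simp [IsWalk] at h2; subst h2
      rcases hor with ⟨h, h'⟩ | ⟨h, h'⟩ <;> exact absurd h h'
    | b :: t' =>
      rw [List.getLast?_cons_cons] at h2
      have hmem : walkEdges (a :: b :: t') = s(a, b) ::ₘ walkEdges (b :: t') := by
        simp [walkEdges]
      rcases hor with ⟨hu, hv⟩ | ⟨hv, hu⟩
      · by_cases hb : b ∈ X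
        · obtain ⟨e, he, hc⟩ := ih b v ⟨rfl, h2⟩ (Or.inl ⟨hb, hv⟩)
          exact ⟨e, by rw [hmem]; exact Multiset.mem_cons_of_mem he, hc⟩
        · exact ⟨s(a, b), by rw [hmem]; exact Multiset.mem_cons_self _ _, a, b, rfl, hu, hb⟩
      · by_cases hb : b ∈ X
        · exact ⟨s(a, b), by rw [hmem]; exact Multiset.mem_cons_self _ _, b, a,
            Sym2.eq_swap.symm, hb, hu⟩
        · obtain ⟨e, he, hc⟩ := ih b v ⟨rfl, h2⟩ (Or.inr ⟨hv, hb⟩)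
          exact ⟨e, by rw [hmem]; exact Multiset.mem_cons_of_mem he, hc⟩

lemma card_le_filter_sum {α β : Type} (p : β → Prop) (w : α → Multiset β) :
    ∀ (Q : Multiset α), (∀ q ∈ Q, 1 ≤ ((w q).filter p).card) →
      Q.card ≤ (((Q.map w).sum).filter p).card := by
  intro Q
  induction Q using Multiset.induction with
  | empty => simp
  | cons a s ih =>
    intro h
    rw [Multiset.map_cons, Multiset.sum_cons, Multiset.filter_add, Multiset.card_add,
      Multiset.card_cons]
    have := h a (Multiset.mem_cons_self _ _)
    have h2 := ih fun q hq => h q (Multiset.mem_cons_of_mem hq)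
    omega

lemma sum_le_of_le {β : Type} {s t : Multiset (Multiset β)} (h : s ≤ t) : s.sum ≤ t.sum := by
  obtain ⟨u, rfl⟩ := Multiset.le_iff_exists_add.mp h
  rw [Multiset.sum_add]; exact le_add_right le_rfl

-- Lemma B
lemma sep_card_le (G : MG V) (φ : Fin 5 → V) (himm : ImmersionVia G w4Edges φ) (X : Finset V) :
    (w4Edges.filter fun e => ∃ u v : Fin 5, e = s(u, v) ∧ φ u ∈ X ∧ φ v ∉ X).card
      ≤ dcut G X := by
  obtain ⟨hinj, hmemv, P, hmap, hwalk, hle⟩ := himm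
  set sep : Sym2 (Fin 5) → Prop := fun e => ∃ u v, e = s(u, v) ∧ φ u ∈ X ∧ φ v ∉ X with hsep
  set Q := P.filter (fun p => sep p.1) with hQ
  have hcard : (w4Edges.filter sep).card = Q.card := by
    rw [← hmap, ← Multiset.countP_eq_card_filter, Multiset.countP_map]
  rw [hcard]
  have h1 : ∀ q ∈ Q, 1 ≤ ((walkEdges q.2).filter
      (fun e => ∃ u v, e = s(u, v) ∧ u ∈ X ∧ v ∉ X)).card := by
    intro q hq
    rw [Multiset.mem_filter] at hq
    obtain ⟨u', v', heq', hu', hv'⟩ := hq.2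
    obtain ⟨u, v, hq1, hwq⟩ := hwalk q hq.1
    rw [hq1] at heq'
    have hor : (φ u ∈ X ∧ φ v ∉ X) ∨ (φ v ∈ X ∧ φ u ∉ X) := by
      rcases Sym2.eq_iff.mp heq' with ⟨rfl, rfl⟩ | ⟨rfl, rfl⟩
      · exact Or.inl ⟨hu', hv'⟩
      · exact Or.inr ⟨hu', hv'⟩
    obtain ⟨e, he, a, b, rfl, ha, hb⟩ := walk_cross q.2 (φ u) (φ v) hwq hor
    have : s(a, b) ∈ (walkEdges q.2).filter
        (fun e => ∃ u v, e = s(u, v) ∧ u ∈ X ∧ v ∉ X) :=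
      Multiset.mem_filter.mpr ⟨he, a, b, rfl, ha, hb⟩
    exact Multiset.card_pos_iff_exists_mem.mpr ⟨_, this⟩
  calc Q.card ≤ (((Q.map fun p => walkEdges p.2).sum).filter
        (fun e => ∃ u v, e = s(u, v) ∧ u ∈ X ∧ v ∉ X)).card :=
      card_le_filter_sum _ _ Q h1
    _ ≤ dcut G X := by
      apply Multiset.card_le_card
      apply Multiset.filter_le_filter
      exact le_trans (sum_le_of_le (Multiset.map_le_map (Multiset.filter_le _ P))) hle

-- sep iff
lemma sepIff (φ : Fin 5 → V) (X : Finset V) (a b : Fin 5) :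
    (∃ u v : Fin 5, s(a, b) = s(u, v) ∧ φ u ∈ X ∧ φ v ∉ X) ↔
      ((φ a ∈ X ∧ φ b ∉ X) ∨ (φ b ∈ X ∧ φ a ∉ X)) := by
  constructor
  · rintro ⟨u, v, heq, hu, hv⟩
    rcases Sym2.eq_iff.mp heq with ⟨rfl, rfl⟩ | ⟨rfl, rfl⟩
    · exact Or.inl ⟨hu, hv⟩
    · exact Or.inr ⟨hu, hv⟩
  · rintro (⟨h1, h2⟩ | ⟨h1, h2⟩)
    · exact ⟨a, b, rfl, h1, h2⟩
    · exact ⟨b, a, Sym2.eq_swap, h1, h2⟩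

-- Lemma C
lemma five_le (φ : Fin 5 → V) (X : Finset V)
    (h0 : φ 0 ∈ X) (j : Fin 5) (hj : j ≠ 0) (hjX : φ j ∈ X)
    (hk : ∀ k : Fin 5, k ≠ 0 → k ≠ j → φ k ∉ X) :
    5 ≤ (w4Edges.filter fun e => ∃ u v : Fin 5, e = s(u, v) ∧ φ u ∈ X ∧ φ v ∉ X).card := by
  fin_cases j
  · exact absurd rfl hj
  · have h2 := hk 2 (by decide) (by decide)
    have h3 := hk 3 (by decide) (by decide)
    have h4 := hk 4 (by decide) (by decide)
    have h1 : φ 1 ∈ X := hjX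
    simp only [w4Edges, Multiset.insert_eq_cons, Multiset.filter_cons,
      Multiset.filter_singleton, sepIff]
    simp [h0, h1, h2, h3, h4]
  · have h2 := hk 1 (by decide) (by decide)
    have h3 := hk 3 (by decide) (by decide)
    have h4 := hk 4 (by decide) (by decide)
    have h1 : φ 2 ∈ X := hjX
    simp only [w4Edges, Multiset.insert_eq_cons, Multiset.filter_cons,
      Multiset.filter_singleton, sepIff]
    simp [h0, h1, h2, h3, h4]
  · have h2 := hk 1 (by decide) (by decide)
    have h3 := hk 2 (by decide) (by decide)
    have h4 := hk 4 (by decide) (by decide)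
    have h1 : φ 3 ∈ X := hjX
    simp only [w4Edges, Multiset.insert_eq_cons, Multiset.filter_cons,
      Multiset.filter_singleton, sepIff]
    simp [h0, h1, h2, h3, h4]
  · have h2 := hk 1 (by decide) (by decide)
    have h3 := hk 2 (by decide) (by decide)
    have h4 := hk 3 (by decide) (by decide)
    have h1 : φ 4 ∈ X := hjX
    simp only [w4Edges, Multiset.insert_eq_cons, Multiset.filter_cons,
      Multiset.filter_singleton, sepIff]
    simp [h0, h1, h2, h3, h4]


/-- Let `G` be a graph with root `x` that has a rooted immersion of
`W₄` with terminal set `T` (the image of the injection `φ`).  If `G` has a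
segmentation `C 0 ⊂ C 1 ⊂ … ⊂ C n` of width four with `x ∈ C 0` and `|C 0| ≤ 2`,
then `T ∩ C n = {x}`. -/
theorem statement_11 {V : Type} (G : MG V) (x : V) (hx : x ∈ G.verts)
    (φ : Fin 5 → V) (h0 : φ 0 = x) (himm : ImmersionVia G w4Edges φ)
    (n : ℕ) (C : Fin (n + 1) → Finset V) (hseg : SegChain G n C 4)
    (hxC : x ∈ C 0) (hC0 : (C 0).card ≤ 2) :
    (Finset.univ.image φ) ∩ C (Fin.last n) = {x} := by
  have hinj : Function.Injective φ := himm.1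
  have key : ∀ (X : Finset V), dcut G X = 4 → φ 0 ∈ X → ∀ j : Fin 5, j ≠ 0 → φ j ∈ X →
      (∀ k : Fin 5, k ≠ 0 → k ≠ j → φ k ∉ X) → False := by
    intro X hd h0X j hj hjX hk
    have h5 := five_le φ X h0X j hj hjX hk
    have hle := sep_card_le G φ himm X
    omega
  have main : ∀ m : ℕ, ∀ hm : m < n + 1,
      x ∈ C ⟨m, hm⟩ ∧ ∀ j : Fin 5, j ≠ 0 → φ j ∉ C ⟨m, hm⟩ := by
    intro m
    induction m with
    | zero =>
      intro hm
      have e0 : (⟨0, hm⟩ : Fin (n + 1)) = 0 := by ext; simp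
      rw [e0]
      refine ⟨hxC, ?_⟩
      intro j hj hjmem
      refine key (C 0) (hseg.2.2 0) (h0 ▸ hxC) j hj hjmem ?_
      intro k hk0 hkj hkmem
      have hsub : ({x, φ j, φ k} : Finset V) ⊆ C 0 := by
        intro y hy
        simp only [Finset.mem_insert, Finset.mem_singleton] at hy
        rcases hy with rfl | rfl | rfl <;> assumption
      have hd1 : x ≠ φ j := fun h => hj (hinj (h0.trans h)).symm
      have hd2 : x ≠ φ k := fun h => hk0 (hinj (h0.trans h)).symm
      have hd3 : φ j ≠ φ k := fun h => hkj (hinj h).symm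
      have hcard3 : ({x, φ j, φ k} : Finset V).card = 3 := by
        rw [Finset.card_insert_of_notMem (by simp [hd1, hd2]),
          Finset.card_insert_of_notMem (by simp [hd3]), Finset.card_singleton]
      have := Finset.card_le_card hsub
      omega
    | succ m ih =>
      intro hm
      have hm' : m < n + 1 := by omega
      obtain ⟨hxm, hTm⟩ := ih hm'
      have hmn : m < n := by omega
      have hstep := hseg.2.1 ⟨m, hmn⟩
      have hsub : C ⟨m, hm'⟩ ⊆ C ⟨m + 1, hm⟩ := hstep.1
      have hone : (C ⟨m + 1, hm⟩ \ C ⟨m, hm'⟩).card = 1 := hstep.2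
      refine ⟨hsub hxm, ?_⟩
      intro j hj hjmem
      refine key (C ⟨m + 1, hm⟩) (hseg.2.2 _) (h0 ▸ hsub hxm) j hj hjmem ?_
      intro k hk0 hkj hkmem
      have hjd : φ j ∈ C ⟨m + 1, hm⟩ \ C ⟨m, hm'⟩ :=
        Finset.mem_sdiff.mpr ⟨hjmem, hTm j hj⟩
      have hkd : φ k ∈ C ⟨m + 1, hm⟩ \ C ⟨m, hm'⟩ :=
        Finset.mem_sdiff.mpr ⟨hkmem, hTm k hk0⟩
      obtain ⟨a, ha⟩ := Finset.card_eq_one.mp hone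
      rw [ha, Finset.mem_singleton] at hjd hkd
      exact hkj (hinj (hkd.trans hjd.symm))
  obtain ⟨hxn, hTn⟩ := main n (Nat.lt_succ_self n)
  have hlast : (Fin.last n) = ⟨n, Nat.lt_succ_self n⟩ := rfl
  ext y
  simp only [Finset.mem_inter, Finset.mem_image, Finset.mem_univ, true_and,
    Finset.mem_singleton]
  constructor
  · rintro ⟨⟨j, rfl⟩, hyC⟩
    by_cases hj : j = 0
    · rw [hj, h0]
    · exact absurd (hlast ▸ hyC) (hTn j hj)
  · rintro rfl
    exact ⟨⟨0, h0⟩, hlast ▸ hxn⟩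


end PaperW4
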